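/- In the symbolic Dolev-Yao deduction system with symmetric encryption, if an atomic key k is not deducible from a set of terms S, and the only occurrence of an atom a in S is inside terms of the form enc(t, k), then a is not deducible from S. -/
import Mathlib


inductive Term where
  | atom : ℕ → Term
  | pair : Term → Term → Term
  | enc : Term → Term → Term
  deriving DecidableEq

inductive Deduce (S : Set Term) : Term → Prop where
  | mem {t : Term} : t ∈ S → Deduce S t
  | pair {t₁ t₂ : Term} : Deduce S t₁ → Deduce S t₂ → Deduce S (Term.pair t₁ t₂)
  | fst {t₁ t₂ : Term} : Deduce S (Term.pair t₁ t₂) → Deduce S t₁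
  | snd {t₁ t₂ : Term} : Deduce S (Term.pair t₁ t₂) → Deduce S t₂
  | enc {t k : Term} : Deduce S t → Deduce S k → Deduce S (Term.enc t k)
  | dec {t k : Term} : Deduce S (Term.enc t k) → Deduce S k → Deduce S t

/-- `Shielded a k t` : every occurrence of the atom `a` in `t` lies strictly
below an `enc` node whose key argument is `atom k`. -/
def Shielded (a k : ℕ) : Term → Prop
  | Term.atom b => a ≠ b
  | Term.pair t₁ t₂ => Shielded a k t₁ ∧ Shielded a k t₂
  | Term.enc t u => (u = Term.atom k ∨ Shielded a k t) ∧ Shielded a k u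

/-- If the key `k` is not deducible from `S` and the atom `a` occurs in `S` only
under encryptions with key `atom k`, then `a` is not deducible from `S`. -/
theorem secrecy_under_encryption (S : Set Term) (a k : ℕ)
    (hk : ¬ Deduce S (Term.atom k))
    (hS : ∀ s ∈ S, Shielded a k s) :
    ¬ Deduce S (Term.atom a) := by
  have inv : ∀ t, Deduce S t → Shielded a k t := by
    intro t ht
    induction ht with
    | mem h => exact hS _ h
    | pair _ _ ih1 ih2 => exact ⟨ih1, ih2⟩
    | fst _ ih => exact ih.1
    | snd _ ih => exact ih.2
    | enc _ _ ih1 ih2 => exact ⟨Or.inr ih1, ih2⟩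
    | dec hd hkey ih1 _ =>
      rcases ih1.1 with h | h
      · exact absurd (h ▸ hkey) hk
      · exact h
  intro h
  exact (inv _ h) rfl
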